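/- arXiv:2004.14681 — 5 statements merged into one kernel-verified Lean document; each statement's English description precedes it below -/
import Mathlib

section
/- Let K be a positive definite diagonal d×d matrix, ρ < 1 a nonnegative scalar, Θ a d×d matrix satisfying Θᵀ K Θ ⪯ ρ·K, and σ : ℝᵈ → ℝᵈ a coordinatewise map where each coordinate function σᵢ : ℝ → ℝ is 1-Lipschitz and satisfies σᵢ(0) = 0. Then for all x ∈ ℝᵈ, ‖σ(Θx)‖_K² ≤ ρ·‖x‖_K², where ‖x‖_K² = ⟨x, Kx⟩. -/
open Matrix

namespace Matrix

variable {n : Type*} [Fintype n]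

theorem IsDiag.dotProduct_mulVec_self {K : Matrix n n ℝ} (hK : K.IsDiag) (v : n → ℝ) :
    v ⬝ᵥ K *ᵥ v = ∑ i, K i i * v i ^ 2 := by
  classical
  conv_lhs => rw [← hK.diagonal_diag]
  simp only [dotProduct, mulVec_diagonal, diag_apply]
  exact Finset.sum_congr rfl fun i _ => by ring

theorem IsDiag.dotProduct_mulVec_self_le_of_abs_le {K : Matrix n n ℝ} (hK : K.IsDiag)
    (hK0 : ∀ i, 0 ≤ K i i) {u v : n → ℝ} (huv : ∀ i, |u i| ≤ |v i|) :
    u ⬝ᵥ K *ᵥ u ≤ v ⬝ᵥ K *ᵥ v := by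
  rw [hK.dotProduct_mulVec_self, hK.dotProduct_mulVec_self]
  exact Finset.sum_le_sum fun i _ => mul_le_mul_of_nonneg_left (sq_le_sq.mpr (huv i)) (hK0 i)

theorem PosSemidef.dotProduct_mulVec_mulVec_le {K Θ : Matrix n n ℝ} {ρ : ℝ}
    (h : (ρ • K - Θᵀ * K * Θ).PosSemidef) (x : n → ℝ) :
    Θ *ᵥ x ⬝ᵥ K *ᵥ (Θ *ᵥ x) ≤ ρ * (x ⬝ᵥ K *ᵥ x) := by
  have hx := h.dotProduct_mulVec_nonneg x
  rw [star_trivial, sub_mulVec, dotProduct_sub, smul_mulVec, dotProduct_smul, smul_eq_mul,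
    ← mulVec_mulVec, ← mulVec_mulVec, dotProduct_mulVec x Θᵀ, vecMul_transpose] at hx
  linarith

end Matrix

theorem stmt0_general (d : ℕ) (K Θ : Matrix (Fin d) (Fin d) ℝ)
    (hKdiag : K.IsDiag) (hKpos : K.PosDef)
    (ρ : ℝ)
    (hLyap : (ρ • K - Θᵀ * K * Θ).PosSemidef)
    (σ : Fin d → ℝ → ℝ)
    (hLip : ∀ i, LipschitzWith 1 (σ i))
    (hzero : ∀ i, σ i 0 = 0) :
    ∀ x : Fin d → ℝ,
      (fun i => σ i (Θ.mulVec x i)) ⬝ᵥ K.mulVec (fun i => σ i (Θ.mulVec x i))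
        ≤ ρ * (x ⬝ᵥ K.mulVec x) := by
  intro x
  have hσ : ∀ i t, |σ i t| ≤ |t| := fun i t => by
    simpa using (hLip i).norm_le_mul (hzero i) t
  calc _ ≤ Θ *ᵥ x ⬝ᵥ K *ᵥ (Θ *ᵥ x) :=
        hKdiag.dotProduct_mulVec_self_le_of_abs_le (fun _ => hKpos.posSemidef.diag_nonneg)
          fun i => hσ i _
    _ ≤ ρ * (x ⬝ᵥ K *ᵥ x) := hLyap.dotProduct_mulVec_mulVec_le x

/-- If K is a positive definite diagonal matrix, ρ < 1 nonnegative,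
ΘᵀKΘ ⪯ ρK, and σ is a coordinatewise 1-Lipschitz map with σᵢ(0) = 0, then
‖σ(Θx)‖_K² ≤ ρ‖x‖_K² for all x. -/
theorem stmt0 (d : ℕ) (K Θ : Matrix (Fin d) (Fin d) ℝ)
    (hKdiag : K.IsDiag) (hKpos : K.PosDef)
    (ρ : ℝ) (hρ0 : 0 ≤ ρ) (hρ1 : ρ < 1)
    (hLyap : (ρ • K - Θᵀ * K * Θ).PosSemidef)
    (σ : Fin d → ℝ → ℝ)
    (hLip : ∀ i, LipschitzWith 1 (σ i))
    (hzero : ∀ i, σ i 0 = 0) :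
    ∀ x : Fin d → ℝ,
      (fun i => σ i (Θ.mulVec x i)) ⬝ᵥ K.mulVec (fun i => σ i (Θ.mulVec x i))
        ≤ ρ * (x ⬝ᵥ K.mulVec x) :=
  stmt0_general d K Θ hKdiag hKpos ρ hLyap σ hLip hzero
end

section
/- Let Θ be the 2×2 matrix with rows (1, 1) and (−1, −1), and let relu : ℝ² → ℝ² be the coordinatewise map x ↦ max(x, 0). Then relu(Θ e₁) = e₁ where e₁ = (1,0), and consequently the map x ↦ relu(Θx) is not globally exponentially stable: its k-fold composition applied to e₁ equals e₁ for all k. -/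
open Matrix

theorem exists_mul_pow_lt_one {C ρ : ℝ} (hC : 0 < C) (hρ : ρ < 1) :
    ∃ k : ℕ, 1 ≤ k ∧ C * ρ ^ k < 1 := by
  rcases le_or_gt ρ 0 with hρ0 | hρ0
  · exact ⟨1, le_rfl, by nlinarith⟩
  · obtain ⟨n, hn⟩ := exists_pow_lt_of_lt_one (inv_pos.2 hC) hρ
    refine ⟨n + 1, by omega, ?_⟩
    calc C * ρ ^ (n + 1) ≤ C * ρ ^ n :=
          mul_le_mul_of_nonneg_left (pow_le_pow_of_le_one hρ0.le hρ.le n.le_succ) hC.le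
      _ < C * C⁻¹ := by gcongr
      _ = 1 := mul_inv_cancel₀ hC.ne'

theorem not_exponentiallyStable_of_isFixedPt {α : Type*} {f : α → α} {x₀ : α} (N : α → ℝ)
    (hx₀ : Function.IsFixedPt f x₀) (hN : 0 < N x₀) :
    ¬ ∃ C ρ : ℝ, 0 < C ∧ ρ < 1 ∧ ∀ k : ℕ, 1 ≤ k → ∀ x, N (f^[k] x) ≤ C * ρ ^ k * N x := by
  rintro ⟨C, ρ, hC, hρ, hdecay⟩
  obtain ⟨k, hk, hsmall⟩ := exists_mul_pow_lt_one hC hρ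
  have hbound := hdecay k hk x₀
  rw [(hx₀.iterate k).eq] at hbound
  nlinarith

/-- For Θ = [[1,1],[−1,−1]] and the coordinatewise ReLU, we have
relu(Θe₁) = e₁; hence the k-fold iterates fix e₁ and the map x ↦ relu(Θx) is not
globally exponentially stable. -/
theorem stmt2 :
    let Θ : Matrix (Fin 2) (Fin 2) ℝ := !![1, 1; -1, -1]
    let relu : (Fin 2 → ℝ) → (Fin 2 → ℝ) := fun x i => max (x i) 0
    let f : (Fin 2 → ℝ) → (Fin 2 → ℝ) := fun x => relu (Θ.mulVec x)
    let e₁ : Fin 2 → ℝ := ![1, 0]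
    (relu (Θ.mulVec e₁) = e₁) ∧
    (∀ k : ℕ, 1 ≤ k → f^[k] e₁ = e₁) ∧
    ¬ ∃ C ρ : ℝ, 0 < C ∧ ρ < 1 ∧
        ∀ k : ℕ, 1 ≤ k → ∀ x : Fin 2 → ℝ,
          Real.sqrt (f^[k] x ⬝ᵥ f^[k] x) ≤ C * ρ ^ k * Real.sqrt (x ⬝ᵥ x) := by
  intro Θ relu f e₁
  have hfix : Function.IsFixedPt f e₁ := by
    funext i
    fin_cases i <;> simp [f, relu, Θ, e₁, dotProduct]
  have hsize : 0 < Real.sqrt (e₁ ⬝ᵥ e₁) := by simp [e₁, dotProduct]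
  exact ⟨hfix, fun k _ => (hfix.iterate k).eq,
    not_exponentiallyStable_of_isFixedPt (fun x => Real.sqrt (x ⬝ᵥ x)) hfix hsize⟩
end

section
/- Let F be a class of functions from ℝᵈ to ℝᵈ with f* ∈ F, let x₁, …, x_n ∈ ℝᵈ, ε₁, …, ε_n ∈ ℝᵈ, and set x_{i+1} = f*(x_i) + ε_i in the sense that the targets satisfy y_i = f*(x_i) + ε_i. If f̂ minimizes ∑_{i=1}^n ‖f(x_i) − y_i‖² over f ∈ F, then ∑_{i=1}^n ‖f̂(x_i) − f*(x_i)‖² ≤ sup_{f ∈ F} ∑_{i=1}^n [4⟨ε_i, f(x_i) − f*(x_i)⟩ − ‖f(x_i) − f*(x_i)‖²]. -/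
open Matrix

/-!
Comparing the empirical loss of `f̂` with that of `f*` and expanding the squares around
`f*(xᵢ)` gives `∑ ‖f̂(xᵢ) - f*(xᵢ)‖² ≤ 2 ∑ ⟨εᵢ, f̂(xᵢ) - f*(xᵢ)⟩`. Doubling this and moving one
copy of the left side to the right bounds the error by the offset term at `f = f̂ ∈ F`, hence by
its supremum over `F`.
-/

section BasicInequality

variable {ι m R : Type*} [Fintype ι] [Fintype m]

theorem dotProduct_sub_self_sub [CommRing R] (u v : m → R) :
    (u - v) ⬝ᵥ (u - v) = u ⬝ᵥ u - 2 * (v ⬝ᵥ u) + v ⬝ᵥ v := by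
  simp only [sub_dotProduct, dotProduct_sub, dotProduct_comm u v]
  ring

variable [CommRing R] [LinearOrder R] [IsStrictOrderedRing R]

theorem sum_dotProduct_self_le_two_mul_of_le (a e : ι → m → R)
    (h : ∑ i, (a i - e i) ⬝ᵥ (a i - e i) ≤ ∑ i, e i ⬝ᵥ e i) :
    ∑ i, a i ⬝ᵥ a i ≤ 2 * ∑ i, e i ⬝ᵥ a i := by
  simp only [dotProduct_sub_self_sub, Finset.sum_add_distrib, Finset.sum_sub_distrib,
    ← Finset.mul_sum] at h
  linarith

theorem sum_dotProduct_self_le_sum_offset_of_le (a e : ι → m → R)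
    (h : ∑ i, (a i - e i) ⬝ᵥ (a i - e i) ≤ ∑ i, e i ⬝ᵥ e i) :
    ∑ i, a i ⬝ᵥ a i ≤ ∑ i, (4 * (e i ⬝ᵥ a i) - a i ⬝ᵥ a i) := by
  have := sum_dotProduct_self_le_two_mul_of_le a e h
  rw [Finset.sum_sub_distrib, ← Finset.mul_sum]
  linarith

end BasicInequality

/-- Basic inequality for least squares: if f̂ minimizes the empirical
square loss over F ∋ f*, with targets y_i = f*(x_i) + ε_i, then the in-sample error of f̂
is bounded by the offset complexity sup over F. -/
theorem stmt3 (d n : ℕ) (F : Set ((Fin d → ℝ) → (Fin d → ℝ)))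
    (fstar : (Fin d → ℝ) → (Fin d → ℝ)) (hfstar : fstar ∈ F)
    (x ε y : Fin n → (Fin d → ℝ))
    (hy : ∀ i, y i = fstar (x i) + ε i)
    (fhat : (Fin d → ℝ) → (Fin d → ℝ)) (hfhat : fhat ∈ F)
    (hmin : ∀ f ∈ F,
      ∑ i, (fhat (x i) - y i) ⬝ᵥ (fhat (x i) - y i)
        ≤ ∑ i, (f (x i) - y i) ⬝ᵥ (f (x i) - y i)) :
    ((∑ i, (fhat (x i) - fstar (x i)) ⬝ᵥ (fhat (x i) - fstar (x i)) : ℝ) : EReal)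
      ≤ ⨆ f ∈ F,
          ((∑ i, (4 * (ε i ⬝ᵥ (f (x i) - fstar (x i)))
            - (f (x i) - fstar (x i)) ⬝ᵥ (f (x i) - fstar (x i))) : ℝ) : EReal) := by
  have hcompare := hmin fstar hfstar
  have hresidual : ∀ f : (Fin d → ℝ) → (Fin d → ℝ), ∀ i,
      f (x i) - y i = (f (x i) - fstar (x i)) - ε i := fun f i => by
    rw [hy]; abel
  simp only [hresidual, sub_self, zero_sub, neg_dotProduct, dotProduct_neg, neg_neg]
    at hcompare
  refine le_iSup₂_of_le fhat hfhat (EReal.coe_le_coe_iff.mpr ?_)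
  exact sum_dotProduct_self_le_sum_offset_of_le _ ε hcompare
end

section
/- Let ε ∼ N(0, I_d) be a standard Gaussian random vector in ℝᵈ, and let relu(t) = max(t, 0). For any two vectors u, v ∈ ℝᵈ, E[(relu(⟨u, ε⟩) − relu(⟨v, ε⟩))²] ≥ (1/4)·‖u − v‖². -/
open MeasureTheory ProbabilityTheory Matrix

/-!
Write `p = relu ⟪u, ε⟫ - relu ⟪v, ε⟫` and `q` for the same expression at `-ε`. Since
`relu t - relu (-t) = t`, we get `p - q = ⟪u - v, ε⟫`, hence `⟪u - v, ε⟫² ≤ 2 (p² + q²)`.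
Averaging over `±ε`, which preserves the symmetric product measure, gives
`E ⟪u - v, ε⟫² ≤ 4 E p²`, and `E ⟪w, ε⟫² ≥ Var ⟪w, ε⟫ = ‖w‖² Var ε₁` by independence of the
coordinates.
-/

instance isNegInvariant_gaussianReal_zero (v : NNReal) : (gaussianReal 0 v).IsNegInvariant :=
  ⟨by simpa [Measure.neg_def] using gaussianReal_map_neg (μ := 0) (v := v)⟩

lemma sq_sub_le_two_mul_relu_sub_sq_add (a b : ℝ) :
    (a - b) ^ 2 ≤ 2 * ((max a 0 - max b 0) ^ 2 + (max (-a) 0 - max (-b) 0) ^ 2) := by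
  have hab : (max a 0 - max b 0) - (max (-a) 0 - max (-b) 0) = a - b := by
    rw [sub_sub_sub_comm, max_zero_sub_max_neg_zero_eq_self, max_zero_sub_max_neg_zero_eq_self]
  rw [← hab]
  nlinarith [sq_nonneg ((max a 0 - max b 0) + (max (-a) 0 - max (-b) 0))]

section PiMeasure

variable {ι : Type*} [Fintype ι] {μ : Measure ℝ} [IsProbabilityMeasure μ]

lemma memLp_dotProduct_pi (hμ : MemLp id 2 μ) (w : ι → ℝ) :
    MemLp (fun ε => w ⬝ᵥ ε) 2 (Measure.pi fun _ : ι => μ) := by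
  simp only [dotProduct]
  exact memLp_finsetSum _ fun i _ =>
    (hμ.comp_measurePreserving (measurePreserving_eval _ i)).const_mul (w i)

lemma variance_dotProduct_pi (hμ : MemLp id 2 μ) (w : ι → ℝ) :
    Var[fun ε => w ⬝ᵥ ε; Measure.pi fun _ : ι => μ] = (w ⬝ᵥ w) * Var[id; μ] := by
  have hsum : (fun ε : ι → ℝ => w ⬝ᵥ ε) = ∑ i, fun ε => w i * ε i := by
    ext ε; simp [dotProduct, Finset.sum_apply]
  rw [hsum]
  refine (variance_sum_pi (X := fun i x => w i * x) fun i => hμ.const_mul (w i)).trans ?_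
  rw [dotProduct, Finset.sum_mul]
  exact Finset.sum_congr rfl fun i _ => by rw [← sq]; exact variance_const_mul (w i) id μ

theorem variance_mul_dotProduct_div_four_le_integral_relu_sub_sq [μ.IsNegInvariant]
    (hμ : MemLp id 2 μ) (u v : ι → ℝ) :
    Var[id; μ] * ((u - v) ⬝ᵥ (u - v)) / 4
      ≤ ∫ ε, (max (u ⬝ᵥ ε) 0 - max (v ⬝ᵥ ε) 0) ^ 2 ∂(Measure.pi fun _ : ι => μ) := by
  set P := Measure.pi fun _ : ι => μ
  set f : (ι → ℝ) → ℝ := fun ε => (max (u ⬝ᵥ ε) 0 - max (v ⬝ᵥ ε) 0) ^ 2 with hf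
  have hw := memLp_dotProduct_pi hμ (u - v)
  have hf_le : ∀ ε, f ε ≤ ((u - v) ⬝ᵥ ε) ^ 2 := fun ε => by
    rw [sub_dotProduct]
    exact sq_le_sq.mpr (abs_max_sub_max_le_abs _ _ _)
  have hf_int : Integrable f P :=
    hw.integrable_sq.mono' (by fun_prop) (.of_forall fun ε => by
      rw [Real.norm_of_nonneg (sq_nonneg _)]; exact hf_le ε)
  have hsymm : ∀ ε, ((u - v) ⬝ᵥ ε) ^ 2 ≤ 2 * (f ε + f (-ε)) := fun ε => by
    simpa only [hf, sub_dotProduct, dotProduct_neg] using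
      sq_sub_le_two_mul_relu_sub_sq_add (u ⬝ᵥ ε) (v ⬝ᵥ ε)
  calc Var[id; μ] * ((u - v) ⬝ᵥ (u - v)) / 4
      = Var[fun ε => (u - v) ⬝ᵥ ε; P] / 4 := by rw [variance_dotProduct_pi hμ, mul_comm]
    _ ≤ (∫ ε, ((u - v) ⬝ᵥ ε) ^ 2 ∂P) / 4 := by
        gcongr; exact variance_le_expectation_sq hw.aestronglyMeasurable
    _ ≤ (∫ ε, 2 * (f ε + f (-ε)) ∂P) / 4 := by
        gcongr ?_ / 4
        exact integral_mono hw.integrable_sq ((hf_int.add hf_int.comp_neg).const_mul 2) hsymm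
    _ = ∫ ε, f ε ∂P := by
        rw [integral_const_mul, integral_add hf_int hf_int.comp_neg, integral_neg_eq_self]
        ring

end PiMeasure

/-- For ε ∼ N(0, I_d) standard Gaussian in ℝᵈ and any u, v ∈ ℝᵈ,
E[(relu⟨u,ε⟩ − relu⟨v,ε⟩)²] ≥ (1/4)‖u − v‖². -/
theorem stmt6 (d : ℕ) (u v : Fin d → ℝ) :
    (1 / 4 : ℝ) * ((u - v) ⬝ᵥ (u - v))
      ≤ ∫ ε : Fin d → ℝ,
          (max (u ⬝ᵥ ε) 0 - max (v ⬝ᵥ ε) 0) ^ 2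
            ∂(Measure.pi fun _ : Fin d => gaussianReal 0 1) := by
  have h := variance_mul_dotProduct_div_four_le_integral_relu_sub_sq
    (memLp_id_gaussianReal (μ := 0) (v := 1) 2) u v
  rw [variance_id_gaussianReal] at h
  convert h using 1
  push_cast
  ring
end

section
/- Let x_{i+1} = σ(Θ* x_i) + ε_{i} with x₀ = 0, where (Θ*)ᵀ K Θ* ⪯ ρ·K for a diagonal K ⪰ I and 0 ≤ ρ < 1, σ is coordinatewise 1-Lipschitz with σ(0) = 0, and suppose every noise vector satisfies ‖ε_i‖_K² ≤ E for some E ≥ 0. Then for every i, ‖K^{1/2} x_i‖ ≤ sqrt(E)/(1 − sqrt(ρ)) ≤ 2·sqrt(E)/(1 − ρ). -/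
/-!
Since `K` is diagonal with nonnegative entries, `‖x‖_K` is the Euclidean norm of `K^{1/2} x`.
In that norm `Θ*` contracts by `√ρ` (this is the Lyapunov inequality), while the coordinatewise
1-Lipschitz `σ` with `σ 0 = 0` does not expand. Hence `a i = ‖x i‖_K` obeys
`a (i + 1) ≤ √ρ * a i + √E`, and starting from `a 0 = 0` it never passes the fixed point
`√E / (1 - √ρ)`.
-/

open Matrix

theorem le_div_one_sub_of_le_mul_add {a : ℕ → ℝ} {c e : ℝ} (hc0 : 0 ≤ c) (hc1 : c < 1)
    (h0 : a 0 ≤ e / (1 - c)) (hstep : ∀ n, a (n + 1) ≤ c * a n + e) (n : ℕ) :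
    a n ≤ e / (1 - c) := by
  induction n with
  | zero => exact h0
  | succ n ih =>
    have hc : 1 - c ≠ 0 := by linarith
    calc a (n + 1) ≤ c * a n + e := hstep n
      _ ≤ c * (e / (1 - c)) + e := by gcongr
      _ = e / (1 - c) := by field_simp; ring

theorem div_one_sub_sqrt_le {a ρ : ℝ} (ha : 0 ≤ a) (hρ0 : 0 ≤ ρ) (hρ1 : ρ < 1) :
    a / (1 - √ρ) ≤ 2 * a / (1 - ρ) := by
  have hs : √ρ < 1 := (Real.sqrt_lt' one_pos).mpr (by linarith)
  have hfac : 1 - ρ = (1 - √ρ) * (1 + √ρ) := by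
    nlinarith [Real.mul_self_sqrt hρ0]
  have hpos : 0 < 1 - √ρ := by linarith
  rw [hfac, div_le_div_iff₀ hpos (by nlinarith [Real.sqrt_nonneg ρ])]
  nlinarith [mul_nonneg (mul_nonneg ha hpos.le) hpos.le]

section WeightedNorm

variable {ι : Type*}

/-- For a diagonal `K ⪰ 0` and `w = diag K` this is `K^{1/2} v`. -/
noncomputable def sqrtWeight (w v : ι → ℝ) : EuclideanSpace ℝ ι :=
  WithLp.toLp 2 fun j => √(w j) * v j

theorem sqrtWeight_add (w v u : ι → ℝ) :
    sqrtWeight w (v + u) = sqrtWeight w v + sqrtWeight w u := by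
  ext j
  simp [sqrtWeight, mul_add]

theorem norm_sqrtWeight [Fintype ι] {w : ι → ℝ} (hw : ∀ j, 0 ≤ w j) (v : ι → ℝ) :
    ‖sqrtWeight w v‖ = √(∑ j, w j * v j ^ 2) := by
  rw [EuclideanSpace.norm_eq]
  congr 1
  refine Finset.sum_congr rfl fun j _ => ?_
  simp [sqrtWeight, mul_pow, Real.sq_sqrt (hw j)]

theorem norm_sqrtWeight_comp_le [Fintype ι] {f : ι → ℝ → ℝ} (hf : ∀ j, LipschitzWith 1 (f j))
    (hf0 : ∀ j, f j 0 = 0) (w v : ι → ℝ) :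
    ‖sqrtWeight w (fun j => f j (v j))‖ ≤ ‖sqrtWeight w v‖ := by
  rw [EuclideanSpace.norm_eq, EuclideanSpace.norm_eq]
  gcongr with j
  simp only [sqrtWeight, norm_mul]
  gcongr
  simpa using (hf j).norm_le_mul (hf0 j) (v j)

theorem Matrix.IsDiag.dotProduct_mulVec_self_s18 [Fintype ι] {K : Matrix ι ι ℝ} (hK : K.IsDiag)
    (v : ι → ℝ) :
    v ⬝ᵥ K *ᵥ v = ∑ j, K j j * v j ^ 2 := by
  classical
  conv_lhs => rw [← hK.diagonal_diag]
  simp only [dotProduct, mulVec_diagonal, diag]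
  exact Finset.sum_congr rfl fun j _ => by ring

theorem norm_sqrtWeight_diag [Fintype ι] {K : Matrix ι ι ℝ} (hK : K.IsDiag) (hK0 : K.PosSemidef)
    (v : ι → ℝ) : ‖sqrtWeight K.diag v‖ = √(v ⬝ᵥ K *ᵥ v) := by
  rw [norm_sqrtWeight (w := K.diag) fun _ => hK0.diag_nonneg, hK.dotProduct_mulVec_self_s18]
  rfl

end WeightedNorm

theorem dotProduct_mulVec_mulVec_le_of_posSemidef {ι : Type*} [Fintype ι]
    {K Θ : Matrix ι ι ℝ} {ρ : ℝ} (h : (ρ • K - Θᵀ * K * Θ).PosSemidef) (v : ι → ℝ) :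
    Θ *ᵥ v ⬝ᵥ K *ᵥ Θ *ᵥ v ≤ ρ * (v ⬝ᵥ K *ᵥ v) := by
  have := h.dotProduct_mulVec_nonneg v
  rw [star_trivial, sub_mulVec, dotProduct_sub, smul_mulVec, dotProduct_smul, smul_eq_mul,
    ← mulVec_mulVec, ← mulVec_mulVec, dotProduct_mulVec v Θᵀ, vecMul_transpose] at this
  linarith

theorem stmt18_general (d : ℕ) (K Θs : Matrix (Fin d) (Fin d) ℝ)
    (hKdiag : K.IsDiag) (hKI : (K - 1).PosSemidef)
    (ρ : ℝ) (hρ0 : 0 ≤ ρ) (hρ1 : ρ < 1)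
    (hLyap : (ρ • K - Θsᵀ * K * Θs).PosSemidef)
    (σ : Fin d → ℝ → ℝ)
    (hLip : ∀ i, LipschitzWith 1 (σ i)) (hzero : ∀ i, σ i 0 = 0)
    (x ε : ℕ → Fin d → ℝ) (E : ℝ)
    (hx0 : x 0 = 0)
    (hdyn : ∀ i, x (i + 1) = (fun j => σ j (Θs.mulVec (x i) j)) + ε i)
    (hεbd : ∀ i, ε i ⬝ᵥ K.mulVec (ε i) ≤ E) :
    ∀ i, Real.sqrt (x i ⬝ᵥ K.mulVec (x i)) ≤ Real.sqrt E / (1 - Real.sqrt ρ) ∧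
      Real.sqrt E / (1 - Real.sqrt ρ) ≤ 2 * Real.sqrt E / (1 - ρ) := by
  have hK : K.PosSemidef := by simpa using hKI.add PosSemidef.one
  have hnorm := norm_sqrtWeight_diag hKdiag hK
  have hsρ : √ρ < 1 := (Real.sqrt_lt' one_pos).mpr (by linarith)
  have hΘ (v : Fin d → ℝ) : ‖sqrtWeight K.diag (Θs *ᵥ v)‖ ≤ √ρ * ‖sqrtWeight K.diag v‖ := by
    rw [hnorm, hnorm, ← Real.sqrt_mul hρ0]
    exact Real.sqrt_le_sqrt (dotProduct_mulVec_mulVec_le_of_posSemidef hLyap v)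
  intro i
  refine ⟨?_, div_one_sub_sqrt_le (Real.sqrt_nonneg E) hρ0 hρ1⟩
  rw [← hnorm]
  refine le_div_one_sub_of_le_mul_add (a := fun n => ‖sqrtWeight K.diag (x n)‖)
    (Real.sqrt_nonneg ρ) hsρ ?_ (fun n => ?_) i
  · simp only [hx0, hnorm, mulVec_zero, dotProduct_zero, Real.sqrt_zero]
    exact div_nonneg (Real.sqrt_nonneg E) (by linarith)
  · rw [hdyn n, sqrtWeight_add]
    calc _ ≤ ‖sqrtWeight K.diag fun j => σ j ((Θs *ᵥ x n) j)‖ + ‖sqrtWeight K.diag (ε n)‖ :=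
          norm_add_le _ _
      _ ≤ √ρ * ‖sqrtWeight K.diag (x n)‖ + √E := by
          gcongr
          · exact (norm_sqrtWeight_comp_le hLip hzero _ _).trans (hΘ (x n))
          · exact hnorm _ ▸ Real.sqrt_le_sqrt (hεbd n)

/-- For x_{i+1} = σ(Θ*x_i) + ε_i with x₀ = 0, (Θ*)ᵀKΘ* ⪯ ρK
(K ⪰ I diagonal, 0 ≤ ρ < 1), σ coordinatewise 1-Lipschitz with σ(0) = 0, and
‖ε_i‖_K² ≤ E for all i, we have ‖K^{1/2}x_i‖ = ‖x_i‖_K ≤ √E/(1 − √ρ) ≤ 2√E/(1 − ρ). -/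
theorem stmt18 (d : ℕ) (K Θs : Matrix (Fin d) (Fin d) ℝ)
    (hKdiag : K.IsDiag) (hKI : (K - 1).PosSemidef)
    (ρ : ℝ) (hρ0 : 0 ≤ ρ) (hρ1 : ρ < 1)
    (hLyap : (ρ • K - Θsᵀ * K * Θs).PosSemidef)
    (σ : Fin d → ℝ → ℝ)
    (hLip : ∀ i, LipschitzWith 1 (σ i)) (hzero : ∀ i, σ i 0 = 0)
    (x ε : ℕ → Fin d → ℝ) (E : ℝ) (hE : 0 ≤ E)
    (hx0 : x 0 = 0)
    (hdyn : ∀ i, x (i + 1) = (fun j => σ j (Θs.mulVec (x i) j)) + ε i)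
    (hεbd : ∀ i, ε i ⬝ᵥ K.mulVec (ε i) ≤ E) :
    ∀ i, Real.sqrt (x i ⬝ᵥ K.mulVec (x i)) ≤ Real.sqrt E / (1 - Real.sqrt ρ) ∧
      Real.sqrt E / (1 - Real.sqrt ρ) ≤ 2 * Real.sqrt E / (1 - ρ) :=
  stmt18_general d K Θs hKdiag hKI ρ hρ0 hρ1 hLyap σ hLip hzero x ε E hx0 hdyn hεbd
end
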